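/- arXiv:1709.10368 — 2 statements merged into one kernel-verified Lean document; each statement's English description precedes it below -/
import Mathlib

section
/- Let f and g be two convex, non-decreasing, Lipschitz functions on [0,∞), with g strictly convex and differentiable. Define ψ(q₁,q₂) = f(q₁) + g(q₂) − q₁q₂ for q₁,q₂ ≥ 0. Then sup_{q₁≥0} inf_{q₂≥0} ψ(q₁,q₂) = sup_{q₂≥0} inf_{q₁≥0} ψ(q₁,q₂). -/
open Set

/-!
Write `ψ p q = f p + g q - p q`. For `p ≥ 0`, a subgradient `s ≥ 0` of `f` at `p` makes `p` a
minimiser of `p' ↦ ψ p' s`, so `⨅ q, ψ p q ≤ ψ p s = ⨅ p', ψ p' s ≤ ⨆ q, ⨅ p', ψ p' q`. This gives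
`sup inf ≤ sup inf` in one order, and exchanging the roles of `f` and `g` gives the other.
In Lean an infimum of a family unbounded below is `0`. If `K` is a Lipschitz constant of `f`, then
`p ↦ ψ p q` is unbounded below for `q > K`, which makes the right-hand side nonnegative and bounded
above.
-/

namespace ConvexOn

variable {S : Set ℝ} {f : ℝ → ℝ} {x y : ℝ}

theorem add_leftDeriv_mul_sub_le (hf : ConvexOn ℝ S f) (hx : x ∈ interior S) (hy : y ∈ S) :
    f x + derivWithin f (Iio x) x * (y - x) ≤ f y := by
  rcases lt_trichotomy y x with hyx | rfl | hxy
  · have h := hf.slope_le_leftDeriv_of_mem_interior hy hx hyx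
    rw [slope_def_field, div_le_iff₀ (sub_pos.2 hyx)] at h
    linarith
  · simp
  · have h := (hf.leftDeriv_le_rightDeriv_of_mem_interior hx).trans
      (hf.rightDeriv_le_slope_of_mem_interior hx hy hxy)
    rw [slope_def_field, le_div_iff₀ (sub_pos.2 hxy)] at h
    linarith

theorem exists_nonneg_subgradient_of_monotoneOn (hf : ConvexOn ℝ (Ici 0) f)
    (hf_mono : MonotoneOn f (Ici 0)) (hx : 0 ≤ x) :
    ∃ s, 0 ≤ s ∧ ∀ y, 0 ≤ y → f x + s * (y - x) ≤ f y := by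
  rcases hx.eq_or_lt with rfl | hx
  · exact ⟨0, le_rfl, fun y hy => by simpa using hf_mono self_mem_Ici hy hy⟩
  have hx_int : x ∈ interior (Ici 0) := by rwa [interior_Ici]
  refine ⟨derivWithin f (Iio x) x, ?_, fun y hy => hf.add_leftDeriv_mul_sub_le hx_int hy⟩
  calc 0 ≤ slope f 0 x := hf_mono.slope_nonneg self_mem_Ici hx.le
    _ ≤ _ := hf.slope_le_leftDeriv_of_mem_interior self_mem_Ici hx_int hx

end ConvexOn

section Minimax

variable {f g : ℝ → ℝ} {K : NNReal}

theorem LipschitzOnWith.le_add_mul_of_nonneg (hf : LipschitzOnWith K f (Ici 0)) {x : ℝ}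
    (hx : 0 ≤ x) : f x ≤ f 0 + K * x := by
  have h := hf.dist_le_mul x hx 0 self_mem_Ici
  rw [Real.dist_eq, Real.dist_eq, sub_zero, abs_of_nonneg hx] at h
  linarith [le_abs_self (f x - f 0)]

theorem not_bddBelow_range_add_sub_mul (hf : LipschitzOnWith K f (Ici 0)) (C : ℝ) {c : ℝ}
    (hc : K < c) : ¬ BddBelow (range fun p : {p : ℝ // 0 ≤ p} => f p + C - p * c) := by
  rintro ⟨b, hb⟩
  set p := (|f 0 + C - b| + 1) / (c - K)
  have hp : 0 ≤ p := div_nonneg (by positivity) (sub_pos.2 hc).le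
  have hpc : (c - K) * p = |f 0 + C - b| + 1 := mul_div_cancel₀ _ (sub_pos.2 hc).ne'
  have hbp : b ≤ f p + C - p * c := hb ⟨⟨p, hp⟩, rfl⟩
  linarith [hf.le_add_mul_of_nonneg hp, le_abs_self (f 0 + C - b)]

theorem iInf_add_sub_mul_eq_zero (hf : LipschitzOnWith K f (Ici 0)) (C : ℝ) {c : ℝ}
    (hc : K < c) : ⨅ p : {p : ℝ // 0 ≤ p}, (f p + C - p * c) = 0 :=
  Real.iInf_of_not_bddBelow (not_bddBelow_range_add_sub_mul hf C hc)

theorem bddAbove_range_iInf_add_sub_mul (hf : LipschitzOnWith K f (Ici 0))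
    (hg : MonotoneOn g (Ici 0)) :
    BddAbove (range fun q : {q : ℝ // 0 ≤ q} =>
      ⨅ p : {p : ℝ // 0 ≤ p}, (f p + g q - p * q)) := by
  refine ⟨max 0 (f 0 + g K), ?_⟩
  rintro _ ⟨q, rfl⟩
  dsimp only
  by_cases hbdd : BddBelow (range fun p : {p : ℝ // 0 ≤ p} => f p + g q - p * q)
  · have hqK : (q : ℝ) ≤ K := not_lt.1 fun h => not_bddBelow_range_add_sub_mul hf _ h hbdd
    calc ⨅ p : {p : ℝ // 0 ≤ p}, (f p + g q - p * q) ≤ f 0 + g q - 0 * q :=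
          ciInf_le hbdd 0
      _ ≤ f 0 + g K := by linarith [hg q.2 K.coe_nonneg hqK]
      _ ≤ _ := le_max_right _ _
  · rw [Real.iInf_of_not_bddBelow hbdd]
    exact le_max_left _ _

theorem iSup_iInf_add_sub_mul_le (hf : ConvexOn ℝ (Ici 0) f) (hf_mono : MonotoneOn f (Ici 0))
    (hf_lip : LipschitzOnWith K f (Ici 0)) (hg : MonotoneOn g (Ici 0)) :
    (⨆ p : {p : ℝ // 0 ≤ p}, ⨅ q : {q : ℝ // 0 ≤ q}, (f p + g q - p * q))
      ≤ ⨆ q : {q : ℝ // 0 ≤ q}, ⨅ p : {p : ℝ // 0 ≤ p}, (f p + g q - p * q) := by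
  have hbdd_above := bddAbove_range_iInf_add_sub_mul hf_lip hg
  refine ciSup_le fun p => ?_
  by_cases hbdd : BddBelow (range fun q : {q : ℝ // 0 ≤ q} => f p + g q - p * q)
  · obtain ⟨s, hs, hsub⟩ := hf.exists_nonneg_subgradient_of_monotoneOn hf_mono p.2
    calc ⨅ q : {q : ℝ // 0 ≤ q}, (f p + g q - p * q) ≤ f p + g s - p * s := ciInf_le hbdd ⟨s, hs⟩
      _ ≤ ⨅ p' : {p : ℝ // 0 ≤ p}, (f p' + g s - p' * s) :=
          le_ciInf fun p' => by linarith [hsub p' p'.2]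
      _ ≤ _ := le_ciSup hbdd_above ⟨s, hs⟩
  · have hK : (K : ℝ) < K + 1 := lt_add_one _
    rw [Real.iInf_of_not_bddBelow hbdd]
    calc (0 : ℝ) = ⨅ p' : {p : ℝ // 0 ≤ p}, (f p' + g (K + 1) - p' * (K + 1)) :=
          (iInf_add_sub_mul_eq_zero hf_lip _ hK).symm
      _ ≤ _ := le_ciSup hbdd_above ⟨K + 1, by positivity⟩

end Minimax

theorem supInf_eq_infSup_general
    (f g : ℝ → ℝ)
    (hf_conv : ConvexOn ℝ (Ici 0) f) (hf_mono : MonotoneOn f (Ici 0))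
    (hf_lip : ∃ K : NNReal, LipschitzOnWith K f (Ici 0))
    (hg_conv : ConvexOn ℝ (Ici 0) g)
    (hg_mono : MonotoneOn g (Ici 0))
    (hg_lip : ∃ K : NNReal, LipschitzOnWith K g (Ici 0)) :
    (⨆ q1 : {q : ℝ // 0 ≤ q}, ⨅ q2 : {q : ℝ // 0 ≤ q},
        (f q1.1 + g q2.1 - q1.1 * q2.1))
      = (⨆ q2 : {q : ℝ // 0 ≤ q}, ⨅ q1 : {q : ℝ // 0 ≤ q},
        (f q1.1 + g q2.1 - q1.1 * q2.1)) := by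
  obtain ⟨Kf, hKf⟩ := hf_lip
  obtain ⟨Kg, hKg⟩ := hg_lip
  refine le_antisymm (iSup_iInf_add_sub_mul_le hf_conv hf_mono hKf hg_mono) ?_
  simpa only [add_comm (g _), mul_comm] using iSup_iInf_add_sub_mul_le hg_conv hg_mono hKg hf_mono

theorem supInf_eq_infSup
    (f g g' : ℝ → ℝ)
    (hf_conv : ConvexOn ℝ (Ici 0) f) (hf_mono : MonotoneOn f (Ici 0))
    (hf_lip : ∃ K : NNReal, LipschitzOnWith K f (Ici 0))
    (hg_conv : ConvexOn ℝ (Ici 0) g) (hg_sconv : StrictConvexOn ℝ (Ici 0) g)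
    (hg_mono : MonotoneOn g (Ici 0))
    (hg_lip : ∃ K : NNReal, LipschitzOnWith K g (Ici 0))
    (hg_deriv : ∀ x ∈ Ici (0:ℝ), HasDerivWithinAt g (g' x) (Ici 0) x) :
    (⨆ q1 : {q : ℝ // 0 ≤ q}, ⨅ q2 : {q : ℝ // 0 ≤ q},
        (f q1.1 + g q2.1 - q1.1 * q2.1))
      = (⨆ q2 : {q : ℝ // 0 ≤ q}, ⨅ q1 : {q : ℝ // 0 ≤ q},
        (f q1.1 + g q2.1 - q1.1 * q2.1)) :=
  supInf_eq_infSup_general f g hf_conv hf_mono hf_lip hg_conv hg_mono hg_lip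
end

section
/- In the sup-inf formula of Lemma 'sup_inf', the inequality direction: the constrained supremum over triples satisfying the three fixed-point equations q₁=f₁'(q₂q₃), q₂=f₂'(q₁q₃), q₃=f₃'(q₁q₂) of f₁(q₂q₃)+f₂(q₁q₃)+f₃(q₁q₂)−2q₁q₂q₃ is at most sup_{q₃≥0} inf_{r≥0}[ f₃(r) + sup_{q₁≥0} inf_{q₂≥0}{f₁(q₂q₃)+f₂(q₁q₃)−q₁q₂q₃} − r q₃ ]. -/
/-!
Fix a feasible triple `(q₁, q₂, q₃)`. By convexity of `f₁`, the tangent line at `q₂q₃` shows that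
`q₁ = f₁'(q₂q₃)` makes `q₂` a minimiser of `q ↦ f₁(q q₃) − q₁ q q₃`, so the value of the pair
`(q₁, q₂)` is at most the inner sup-inf at `q₃`; in the same way `q₃ = f₃'(q₁q₂)` makes `q₁q₂` a
minimiser of `r ↦ f₃(r) − r q₃`. Adding the two bounds gives the value of the triple. The Lipschitz
bounds keep all suprema finite: an infimum over `r ≥ 0` of a function below a line of negative
slope is `-∞` (in Lean the junk value `0`), and otherwise it is at most the value at `r = 0`.
-/

open Set NNReal

lemma ConvexOn.add_mul_sub_le_of_hasDerivWithinAt {S : Set ℝ} {f : ℝ → ℝ} {f' x y : ℝ}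
    (hf : ConvexOn ℝ S f) (hx : x ∈ S) (hy : y ∈ S) (hf' : HasDerivWithinAt f f' S x) :
    f x + f' * (y - x) ≤ f y := by
  rcases lt_trichotomy x y with hxy | rfl | hyx
  · have hslope := hf.le_slope_of_hasDerivWithinAt hx hy hxy hf'
    rw [slope_def_field, le_div_iff₀ (sub_pos.2 hxy)] at hslope
    linarith
  · simp
  · have hslope := hf.slope_le_of_hasDerivWithinAt hy hx hyx hf'
    rw [slope_def_field, div_le_iff₀ (sub_pos.2 hyx)] at hslope
    linarith

lemma LipschitzOnWith.le_apply_zero_add_mul {f : ℝ → ℝ} {K : ℝ≥0}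
    (hf : LipschitzOnWith K f (Ici 0)) {x : ℝ} (hx : 0 ≤ x) : f x ≤ f 0 + K * x := by
  simpa [Real.dist_eq, abs_of_nonneg hx] using hf.le_add_mul (mem_Ici.2 hx) self_mem_Ici

lemma Real.iInf_le_max_zero {ι : Type*} (F : ι → ℝ) (i : ι) : ⨅ j, F j ≤ max 0 (F i) := by
  by_cases hF : BddBelow (range F)
  · exact (ciInf_le hF i).trans (le_max_right _ _)
  · rw [Real.iInf_of_not_bddBelow hF]
    exact le_max_left _ _

lemma Real.iInf_nonneg_subtype_eq_zero_of_le_affine (F : {q : ℝ // 0 ≤ q} → ℝ) {a s : ℝ}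
    (hs : s < 0) (hF : ∀ r, F r ≤ a + s * r.1) : ⨅ r, F r = 0 := by
  refine Real.iInf_of_not_bddBelow fun ⟨b, hb⟩ => ?_
  set r : ℝ := max 0 ((b - a - 1) / s)
  have hr : s * r ≤ b - a - 1 := by
    calc s * r ≤ s * ((b - a - 1) / s) := mul_le_mul_of_nonpos_left (le_max_right _ _) hs.le
      _ = b - a - 1 := mul_div_cancel₀ _ hs.ne
  have hb_le : b ≤ F ⟨r, le_max_left _ _⟩ := hb (mem_range_self _)
  linarith [hF ⟨r, le_max_left _ _⟩]

noncomputable def pairSupInf (f1 f2 : ℝ → ℝ) (t : ℝ) : ℝ :=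
  ⨆ q1 : {q : ℝ // 0 ≤ q}, ⨅ q2 : {q : ℝ // 0 ≤ q},
    (f1 (q2.1 * t) + f2 (q1.1 * t) - q1.1 * q2.1 * t)

noncomputable def tripleInf (f1 f2 f3 : ℝ → ℝ) (t : ℝ) : ℝ :=
  ⨅ r : {q : ℝ // 0 ≤ q}, (f3 r.1 + pairSupInf f1 f2 t - r.1 * t)

section SupInf

variable {f1 f2 f3 : ℝ → ℝ} {K1 K2 K3 : ℝ≥0}

lemma iInf_pair_le (hK1 : LipschitzOnWith K1 f1 (Ici 0)) (hK2 : LipschitzOnWith K2 f2 (Ici 0))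
    {t : ℝ} (ht : 0 ≤ t) (q1 : {q : ℝ // 0 ≤ q}) :
    ⨅ q2 : {q : ℝ // 0 ≤ q}, (f1 (q2.1 * t) + f2 (q1.1 * t) - q1.1 * q2.1 * t)
      ≤ max 0 (f1 0 + f2 0 + K2 * (K1 * t)) := by
  by_cases hslope : (K1 - q1.1) * t < 0
  · rw [Real.iInf_nonneg_subtype_eq_zero_of_le_affine _ hslope (a := f1 0 + f2 (q1.1 * t))
      fun q2 => by linarith [hK1.le_apply_zero_add_mul (mul_nonneg q2.2 ht)]]
    exact le_max_left _ _
  · refine (Real.iInf_le_max_zero _ ⟨0, le_rfl⟩).trans (max_le_max le_rfl ?_)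
    have hf2 := hK2.le_apply_zero_add_mul (mul_nonneg q1.2 ht)
    have hq1 : q1.1 * t ≤ K1 * t := by linarith
    have hK2q1 := mul_le_mul_of_nonneg_left hq1 K2.coe_nonneg
    simp only [zero_mul, mul_zero, sub_zero]
    linarith

lemma pairSupInf_le (hK1 : LipschitzOnWith K1 f1 (Ici 0)) (hK2 : LipschitzOnWith K2 f2 (Ici 0))
    {t : ℝ} (ht : 0 ≤ t) : pairSupInf f1 f2 t ≤ max 0 (f1 0 + f2 0 + K2 * (K1 * t)) :=
  Real.iSup_le (iInf_pair_le hK1 hK2 ht) (le_max_left _ _)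

lemma le_pairSupInf (hK1 : LipschitzOnWith K1 f1 (Ici 0))
    (hK2 : LipschitzOnWith K2 f2 (Ici 0)) (h1_conv : ConvexOn ℝ (Ici 0) f1)
    {q1 q2 t : ℝ} (hq1 : 0 ≤ q1) (hq2 : 0 ≤ q2) (ht : 0 ≤ t)
    (h1_deriv : HasDerivWithinAt f1 q1 (Ici 0) (q2 * t)) :
    f1 (q2 * t) + f2 (q1 * t) - q1 * q2 * t ≤ pairSupInf f1 f2 t := by
  have hbdd : BddAbove (range fun q1 : {q : ℝ // 0 ≤ q} => ⨅ q2 : {q : ℝ // 0 ≤ q},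
      (f1 (q2.1 * t) + f2 (q1.1 * t) - q1.1 * q2.1 * t)) :=
    ⟨_, forall_mem_range.2 (iInf_pair_le hK1 hK2 ht)⟩
  refine le_ciSup_of_le hbdd ⟨q1, hq1⟩ (le_ciInf fun q2' => ?_)
  have htangent := h1_conv.add_mul_sub_le_of_hasDerivWithinAt (mem_Ici.2 (mul_nonneg hq2 ht))
    (mem_Ici.2 (mul_nonneg q2'.2 ht)) h1_deriv
  dsimp only
  linarith

lemma tripleInf_le (hK1 : LipschitzOnWith K1 f1 (Ici 0)) (hK2 : LipschitzOnWith K2 f2 (Ici 0))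
    (hK3 : LipschitzOnWith K3 f3 (Ici 0)) {t : ℝ} (ht : 0 ≤ t) :
    tripleInf f1 f2 f3 t ≤ max 0 (f3 0 + max 0 (f1 0 + f2 0 + K2 * (K1 * K3))) := by
  by_cases hslope : (K3 : ℝ) - t < 0
  · rw [tripleInf, Real.iInf_nonneg_subtype_eq_zero_of_le_affine _ hslope
      (a := f3 0 + pairSupInf f1 f2 t) fun r => by linarith [hK3.le_apply_zero_add_mul r.2]]
    exact le_max_left _ _
  · refine (Real.iInf_le_max_zero _ ⟨0, le_rfl⟩).trans (max_le_max le_rfl ?_)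
    have hS := pairSupInf_le hK1 hK2 ht
    have hK3t : (K2 : ℝ) * (K1 * t) ≤ K2 * (K1 * K3) := by gcongr; linarith
    simp only [zero_mul, sub_zero, add_le_add_iff_left]
    exact hS.trans (max_le_max le_rfl (by linarith))

lemma tripleInf_eq_zero (hK3 : LipschitzOnWith K3 f3 (Ici 0)) :
    tripleInf f1 f2 f3 (K3 + 1) = 0 :=
  Real.iInf_nonneg_subtype_eq_zero_of_le_affine _ (by norm_num : (-1 : ℝ) < 0)
    (a := f3 0 + pairSupInf f1 f2 (K3 + 1)) fun r => by
      linarith [hK3.le_apply_zero_add_mul r.2]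

lemma le_tripleInf (hK1 : LipschitzOnWith K1 f1 (Ici 0))
    (hK2 : LipschitzOnWith K2 f2 (Ici 0)) (h1_conv : ConvexOn ℝ (Ici 0) f1)
    (h3_conv : ConvexOn ℝ (Ici 0) f3) {q1 q2 q3 : ℝ} (hq1 : 0 ≤ q1) (hq2 : 0 ≤ q2) (hq3 : 0 ≤ q3)
    (h1_deriv : HasDerivWithinAt f1 q1 (Ici 0) (q2 * q3))
    (h3_deriv : HasDerivWithinAt f3 q3 (Ici 0) (q1 * q2)) :
    f1 (q2 * q3) + f2 (q1 * q3) + f3 (q1 * q2) - 2 * (q1 * q2 * q3) ≤ tripleInf f1 f2 f3 q3 := by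
  have hpair := le_pairSupInf hK1 hK2 h1_conv hq1 hq2 hq3 h1_deriv
  refine le_ciInf fun r => ?_
  have htangent := h3_conv.add_mul_sub_le_of_hasDerivWithinAt (mem_Ici.2 (mul_nonneg hq1 hq2))
    (mem_Ici.2 r.2) h3_deriv
  linarith

end SupInf

theorem sup_inf_three_functions_easy_direction_general
    (f1 f2 f3 f1' f2' f3' : ℝ → ℝ)
    (h1_conv : ConvexOn ℝ (Ici 0) f1)
    (h1_lip : ∃ K : NNReal, LipschitzOnWith K f1 (Ici 0))
    (h1_deriv : ∀ x ∈ Ici (0:ℝ), HasDerivWithinAt f1 (f1' x) (Ici 0) x)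
    (h2_lip : ∃ K : NNReal, LipschitzOnWith K f2 (Ici 0))
    (h3_conv : ConvexOn ℝ (Ici 0) f3)
    (h3_lip : ∃ K : NNReal, LipschitzOnWith K f3 (Ici 0))
    (h3_deriv : ∀ x ∈ Ici (0:ℝ), HasDerivWithinAt f3 (f3' x) (Ici 0) x) :
    sSup {y : ℝ | ∃ q1 q2 q3 : ℝ, 0 ≤ q1 ∧ 0 ≤ q2 ∧ 0 ≤ q3 ∧
          q1 = f1' (q2 * q3) ∧ q2 = f2' (q1 * q3) ∧ q3 = f3' (q1 * q2) ∧
          y = f1 (q2 * q3) + f2 (q1 * q3) + f3 (q1 * q2) - 2 * (q1 * q2 * q3)}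
      ≤ ⨆ q3 : {q : ℝ // 0 ≤ q}, ⨅ r : {q : ℝ // 0 ≤ q},
          (f3 r.1
            + (⨆ q1 : {q : ℝ // 0 ≤ q}, ⨅ q2 : {q : ℝ // 0 ≤ q},
                (f1 (q2.1 * q3.1) + f2 (q1.1 * q3.1) - q1.1 * q2.1 * q3.1))
            - r.1 * q3.1) := by
  obtain ⟨K1, hK1⟩ := h1_lip
  obtain ⟨K2, hK2⟩ := h2_lip
  obtain ⟨K3, hK3⟩ := h3_lip
  change _ ≤ ⨆ q3 : {q : ℝ // 0 ≤ q}, tripleInf f1 f2 f3 q3.1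
  have hbdd : BddAbove (range fun q3 : {q : ℝ // 0 ≤ q} => tripleInf f1 f2 f3 q3.1) :=
    ⟨_, forall_mem_range.2 fun q3 => tripleInf_le hK1 hK2 hK3 q3.2⟩
  refine Real.sSup_le ?_ (Real.iSup_nonneg' ⟨⟨K3 + 1, by positivity⟩, (tripleInf_eq_zero hK3).ge⟩)
  rintro _ ⟨q1, q2, q3, hq1, hq2, hq3, e1, -, e3, rfl⟩
  refine le_ciSup_of_le hbdd ⟨q3, hq3⟩ ?_
  exact le_tripleInf hK1 hK2 h1_conv h3_conv hq1 hq2 hq3 (e1 ▸ h1_deriv _ (mul_nonneg hq2 hq3))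
    (e3 ▸ h3_deriv _ (mul_nonneg hq1 hq2))

theorem sup_inf_three_functions_easy_direction
    (f1 f2 f3 f1' f2' f3' : ℝ → ℝ)
    (h1_conv : ConvexOn ℝ (Ici 0) f1) (h1_sconv : StrictConvexOn ℝ (Ici 0) f1)
    (h1_mono : MonotoneOn f1 (Ici 0))
    (h1_lip : ∃ K : NNReal, LipschitzOnWith K f1 (Ici 0))
    (h1_deriv : ∀ x ∈ Ici (0:ℝ), HasDerivWithinAt f1 (f1' x) (Ici 0) x)
    (h2_conv : ConvexOn ℝ (Ici 0) f2) (h2_sconv : StrictConvexOn ℝ (Ici 0) f2)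
    (h2_mono : MonotoneOn f2 (Ici 0))
    (h2_lip : ∃ K : NNReal, LipschitzOnWith K f2 (Ici 0))
    (h2_deriv : ∀ x ∈ Ici (0:ℝ), HasDerivWithinAt f2 (f2' x) (Ici 0) x)
    (h3_conv : ConvexOn ℝ (Ici 0) f3) (h3_sconv : StrictConvexOn ℝ (Ici 0) f3)
    (h3_mono : MonotoneOn f3 (Ici 0))
    (h3_lip : ∃ K : NNReal, LipschitzOnWith K f3 (Ici 0))
    (h3_deriv : ∀ x ∈ Ici (0:ℝ), HasDerivWithinAt f3 (f3' x) (Ici 0) x) :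
    sSup {y : ℝ | ∃ q1 q2 q3 : ℝ, 0 ≤ q1 ∧ 0 ≤ q2 ∧ 0 ≤ q3 ∧
          q1 = f1' (q2 * q3) ∧ q2 = f2' (q1 * q3) ∧ q3 = f3' (q1 * q2) ∧
          y = f1 (q2 * q3) + f2 (q1 * q3) + f3 (q1 * q2) - 2 * (q1 * q2 * q3)}
      ≤ ⨆ q3 : {q : ℝ // 0 ≤ q}, ⨅ r : {q : ℝ // 0 ≤ q},
          (f3 r.1
            + (⨆ q1 : {q : ℝ // 0 ≤ q}, ⨅ q2 : {q : ℝ // 0 ≤ q},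
                (f1 (q2.1 * q3.1) + f2 (q1.1 * q3.1) - q1.1 * q2.1 * q3.1))
            - r.1 * q3.1) :=
  sup_inf_three_functions_easy_direction_general f1 f2 f3 f1' f2' f3' h1_conv h1_lip h1_deriv h2_lip
    h3_conv h3_lip h3_deriv
end
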